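/- Define W : ℕ → ℕ by W(0) = 0, W(1) = 0, and W(n) = W(⌊n/2⌋) + W(⌈n/2⌉) + n - 1 for n ≥ 2. Then for every n ≥ 1, W(n) = ∑_{i=1}^{n} ⌈log₂ i⌉. -/
import Mathlib


def W : ℕ → ℕ
  | 0 => 0
  | 1 => 0
  | n + 2 => W ((n + 2) / 2) + W ((n + 3) / 2) + (n + 2) - 1
decreasing_by all_goals omega

private def S (n : ℕ) : ℕ := ∑ i ∈ Finset.Icc 1 n, Nat.clog 2 i

private lemma S_succ (n : ℕ) : S (n + 1) = S n + Nat.clog 2 (n + 1) := by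
  unfold S
  rw [Finset.sum_Icc_succ_top (by omega)]

private lemma S1 : S 1 = 0 := by simp [S]

private lemma clog_step (m : ℕ) (hm : 2 ≤ m) :
    Nat.clog 2 m = Nat.clog 2 ((m + 1) / 2) + 1 := by
  have := Nat.clog_of_two_le (b := 2) (n := m) (by norm_num) hm
  simpa using this

private lemma S2 : S 2 = 1 := by
  have h : S 2 = S 1 + Nat.clog 2 2 := S_succ 1
  have c : Nat.clog 2 2 = Nat.clog 2 1 + 1 := clog_step 2 (by norm_num)
  simp [h, c, S1, Nat.clog_one_right]

private lemma S3 : S 3 = 3 := by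
  have h : S 3 = S 2 + Nat.clog 2 3 := S_succ 2
  have c : Nat.clog 2 3 = Nat.clog 2 2 + 1 := clog_step 3 (by norm_num)
  have c2 : Nat.clog 2 2 = Nat.clog 2 1 + 1 := clog_step 2 (by norm_num)
  simp [h, c, c2, S2, Nat.clog_one_right]

private lemma key : ∀ n, 2 ≤ n → S n = S (n / 2) + S ((n + 1) / 2) + (n - 1) := by
  intro n
  induction n using Nat.strong_induction_on with
  | _ n ih =>
    intro hn
    match n, hn with
    | 2, _ => simp [S1, S2]
    | 3, _ => simp [S1, S2, S3]
    | (m + 4), _ =>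
      have hkey : S (m + 2) = S ((m + 2) / 2) + S ((m + 3) / 2) + (m + 1) :=
        ih (m + 2) (by omega) (by omega)
      have h1 : (m + 4) / 2 = (m + 2) / 2 + 1 := by omega
      have h2 : (m + 5) / 2 = (m + 3) / 2 + 1 := by omega
      have c1 : Nat.clog 2 (m + 3) = Nat.clog 2 ((m + 4) / 2) + 1 :=
        clog_step (m + 3) (by omega)
      have c2 : Nat.clog 2 (m + 4) = Nat.clog 2 ((m + 5) / 2) + 1 :=
        clog_step (m + 4) (by omega)
      have a1 : S (m + 4) = S (m + 3) + Nat.clog 2 (m + 4) := S_succ (m + 3)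
      have a2 : S (m + 3) = S (m + 2) + Nat.clog 2 (m + 3) := S_succ (m + 2)
      have b1 : S ((m + 4) / 2) = S ((m + 2) / 2) + Nat.clog 2 ((m + 4) / 2) := by
        rw [h1, S_succ, ← h1]
      have b2 : S ((m + 5) / 2) = S ((m + 3) / 2) + Nat.clog 2 ((m + 5) / 2) := by
        rw [h2, S_succ, ← h2]
      show S (m + 4) = S ((m + 4) / 2) + S ((m + 5) / 2) + (m + 4 - 1)
      omega

theorem mergeSort_worst_case_sum (n : ℕ) (hn : 1 ≤ n) :
    W n = ∑ i ∈ Finset.Icc 1 n, Nat.clog 2 i := by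
  have main : ∀ n, 1 ≤ n → W n = S n := by
    intro n
    induction n using Nat.strong_induction_on with
    | _ n ih =>
      intro hn
      match n, hn with
      | 1, _ => simp [W, S1]
      | (m + 2), _ =>
        have h1 := ih ((m + 2) / 2) (by omega) (by omega)
        have h2 := ih ((m + 3) / 2) (by omega) (by omega)
        have hk : S (m + 2) = S ((m + 2) / 2) + S ((m + 3) / 2) + (m + 1) :=
          key (m + 2) (by omega)
        rw [W, h1, h2]
        omega
  exact main n hn
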